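/- arXiv:0904.1652 — 3 statements merged into one kernel-verified Lean document; each statement's English description precedes it below -/
import Mathlib

section
/- If p(n) = w(n)/n with w(n) → 0 as n → ∞, then the probability that the Erdős–Rényi random graph G(n, p(n)) is a forest (contains no cycle) tends to 1 as n → ∞. -/
/-!
If `G(n, p)` is not a forest it contains a cycle, i.e. a cyclic vertex sequence `Fin k → Fin n`
with `k ≥ 3` whose `k` consecutive pairs are distinct edges of the graph. Such a sequence is
present with probability `p ^ k`, and there are at most `n ^ k` of them, so by the union bound the
graph fails to be a forest with probability at most `∑_{k ≥ 3} (n p) ^ k = ∑_{k ≥ 3} w ^ k`,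
which is at most `w ^ 3 / (1 - w)` once `w < 1`.
-/

open scoped Classical

open Filter Finset

theorem pow_mul_one_sub_pow_nonneg {x : ℝ} (hx0 : 0 ≤ x) (hx1 : x ≤ 1) (a b : ℕ) :
    0 ≤ x ^ a * (1 - x) ^ b :=
  mul_nonneg (pow_nonneg hx0 a) (pow_nonneg (sub_nonneg.2 hx1) b)

namespace Finset

variable {α : Type*}

-- `x ^ #E * (1 - x) ^ (#U - #E)` is the probability that a random subset of `U`, containing each
-- element independently with probability `x`, is exactly `E`.
theorem sum_powerset_pow_mul_one_sub_pow {R : Type*} [CommRing R] (U : Finset α) (x : R) :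
    ∑ E ∈ U.powerset, x ^ #E * (1 - x) ^ (#U - #E) = 1 := by
  simpa using sum_pow_mul_eq_add_pow x (1 - x) U

theorem sum_powerset_ite_eq_one_sub {R : Type*} [CommRing R] (U : Finset α) (P : Finset α → Prop)
    [DecidablePred P] (x : R) :
    ∑ E ∈ U.powerset, (if P E then x ^ #E * (1 - x) ^ (#U - #E) else 0)
      = 1 - ∑ E ∈ U.powerset with ¬ P E, x ^ #E * (1 - x) ^ (#U - #E) := by
  rw [← sum_filter, eq_sub_iff_add_eq, sum_filter_add_sum_filter_not,
    sum_powerset_pow_mul_one_sub_pow]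

variable [DecidableEq α]

theorem sum_Icc_pow_mul_one_sub_pow {R : Type*} [CommRing R] {C U : Finset α} (hCU : C ⊆ U)
    (x : R) : ∑ E ∈ Icc C U, x ^ #E * (1 - x) ^ (#U - #E) = x ^ #C := by
  have hdisj : ∀ F ∈ (U \ C).powerset, Disjoint C F := fun F hF =>
    disjoint_sdiff.mono_right (mem_powerset.1 hF)
  rw [Icc_eq_image_powerset hCU, sum_image fun F hF G hG h => by
    rw [← (hdisj F hF).symm.sdiff_eq_left, ← (hdisj G hG).symm.sdiff_eq_left, ← union_sdiff_left,
      h, union_sdiff_left]]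
  calc ∑ F ∈ (U \ C).powerset, x ^ #(C ∪ F) * (1 - x) ^ (#U - #(C ∪ F))
      = ∑ F ∈ (U \ C).powerset, x ^ #C * (x ^ #F * (1 - x) ^ (#(U \ C) - #F)) := by
        refine sum_congr rfl fun F hF => ?_
        have hFU : #F ≤ #(U \ C) := card_le_card (mem_powerset.1 hF)
        rw [card_union_of_disjoint (hdisj F hF), card_sdiff_of_subset hCU] at *
        rw [pow_add, show #U - (#C + #F) = #U - #C - #F by omega]
        ring
    _ = x ^ #C := by rw [← mul_sum, sum_powerset_pow_mul_one_sub_pow, mul_one]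

theorem sum_le_sum_sum_filter_superset {ι M : Type*} [AddCommMonoid M] [PartialOrder M]
    [IsOrderedAddMonoid M] {S : Finset (Finset α)} {I : Finset ι} {C : ι → Finset α}
    {g : Finset α → M} (hg : ∀ E ∈ S, 0 ≤ g E) (hS : ∀ E ∈ S, ∃ i ∈ I, C i ⊆ E) :
    ∑ E ∈ S, g E ≤ ∑ i ∈ I, ∑ E ∈ S with C i ⊆ E, g E := by
  simp_rw [sum_filter]
  rw [sum_comm]
  refine sum_le_sum fun E hE => ?_
  obtain ⟨i, hi, hCE⟩ := hS E hE
  simpa [hCE] using single_le_sum (f := fun j => if C j ⊆ E then g E else 0)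
    (fun j _ => by split_ifs <;> simp [hg E hE]) hi

theorem sum_powerset_filter_le_sum_pow {ι : Type*} {U : Finset α} {P : Finset α → Prop}
    [DecidablePred P] {x : ℝ} (hx0 : 0 ≤ x) (hx1 : x ≤ 1) {I : Finset ι} {C : ι → Finset α}
    (hCU : ∀ i ∈ I, C i ⊆ U) (hP : ∀ E ⊆ U, P E → ∃ i ∈ I, C i ⊆ E) :
    ∑ E ∈ U.powerset with P E, x ^ #E * (1 - x) ^ (#U - #E) ≤ ∑ i ∈ I, x ^ #(C i) := by
  have hg (E : Finset α) := pow_mul_one_sub_pow_nonneg hx0 hx1 #E (#U - #E)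
  refine (sum_le_sum_sum_filter_superset (C := C) (fun E _ => hg E) fun E hE => ?_).trans
    (sum_le_sum fun i hi => ?_)
  · simp only [mem_filter, mem_powerset] at hE
    exact hP E hE.1 hE.2
  · rw [← sum_Icc_pow_mul_one_sub_pow (hCU i hi), Icc_eq_filter_powerset, filter_filter]
    exact sum_le_sum_of_subset_of_nonneg (monotone_filter_right _ fun _ _ h => h.2)
      fun E _ _ => hg E

end Finset

theorem coe_finRotate_eq_mod {k : ℕ} (i : Fin k) : (finRotate k i : ℕ) = (i + 1) % k := by
  rcases k with _ | k
  · exact i.elim0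
  · rw [coe_finRotate]
    split_ifs with h
    · simp [h]
    · rw [Nat.mod_eq_of_lt]; have := Fin.val_lt_last h; omega

namespace SimpleGraph

variable {V : Type*}

theorem Walk.getVert_finRotate {G : SimpleGraph V} {v : V} (c : G.Walk v v) (i : Fin c.length) :
    c.getVert (finRotate c.length i) = c.getVert (i + 1) := by
  rw [coe_finRotate_eq_mod]
  obtain h | h := (show (i : ℕ) + 1 ≤ c.length from i.2).lt_or_eq
  · rw [Nat.mod_eq_of_lt h]
  · rw [h, Nat.mod_self, getVert_zero, getVert_length]

variable [DecidableEq V]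

def cycleEdges {k : ℕ} (L : Fin k → V) : Finset (Sym2 V) :=
  univ.image fun i => s(L i, L (finRotate k i))

theorem Walk.cycleEdges_getVert {G : SimpleGraph V} {v : V} (c : G.Walk v v) :
    cycleEdges (fun i : Fin c.length => c.getVert i) = c.edges.toFinset := by
  ext e
  simp only [cycleEdges, mem_image, mem_univ, true_and, List.mem_toFinset, c.getVert_finRotate,
    List.mem_iff_getElem, getElem_edges, length_edges]
  exact ⟨fun ⟨i, hi⟩ => ⟨i, i.2, hi⟩, fun ⟨i, hi, he⟩ => ⟨⟨i, hi⟩, he⟩⟩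

theorem exists_cycleEdges_of_not_isAcyclic {G : SimpleGraph V} (hG : ¬ G.IsAcyclic) :
    ∃ k, 3 ≤ k ∧ ∃ L : Fin k → V, #(cycleEdges L) = k ∧ ↑(cycleEdges L) ⊆ G.edgeSet := by
  obtain ⟨v, c, hc⟩ : ∃ v, ∃ c : G.Walk v v, c.IsCycle := by simpa [IsAcyclic] using hG
  refine ⟨c.length, hc.three_le_length, fun i => c.getVert i, ?_, ?_⟩
  · rw [c.cycleEdges_getVert, List.toFinset_card_of_nodup hc.edges_nodup, Walk.length_edges]
  · rw [c.cycleEdges_getVert, List.coe_toFinset]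
    exact c.edges_subset_edgeSet

theorem sum_powerset_filter_not_isAcyclic_le [Fintype V] (U : Finset (Sym2 V)) {x : ℝ}
    (hx0 : 0 ≤ x) (hx1 : x ≤ 1) :
    ∑ E ∈ U.powerset.filter fun E : Finset (Sym2 V) => ¬ (fromEdgeSet (E : Set (Sym2 V))).IsAcyclic,
        x ^ #E * (1 - x) ^ (#U - #E)
      ≤ ∑ k ∈ Icc 3 #U, (Fintype.card V * x) ^ k := by
  let cycles (k : ℕ) : Finset (Fin k → V) := {L | #(cycleEdges L) = k ∧ cycleEdges L ⊆ U}
  calc _ ≤ ∑ i ∈ (Icc 3 #U).sigma cycles, x ^ #(cycleEdges i.2) := by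
        refine sum_powerset_filter_le_sum_pow hx0 hx1 (fun i hi => ?_) fun E hEU hE => ?_
        · simp only [mem_sigma, cycles, mem_filter] at hi
          exact hi.2.2.2
        · obtain ⟨k, hk, L, hcard, hsub⟩ := exists_cycleEdges_of_not_isAcyclic hE
          rw [edgeSet_fromEdgeSet] at hsub
          have hLE : cycleEdges L ⊆ E := coe_subset.1 (hsub.trans Set.sdiff_subset)
          refine ⟨⟨k, L⟩, ?_, hLE⟩
          simp only [mem_sigma, mem_Icc, cycles, mem_filter, mem_univ, true_and]
          exact ⟨⟨hk, hcard ▸ card_le_card (hLE.trans hEU)⟩, hcard, hLE.trans hEU⟩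
    _ = ∑ k ∈ Icc 3 #U, ∑ L ∈ cycles k, x ^ k := by
        rw [sum_sigma]
        refine sum_congr rfl fun k _ => sum_congr rfl fun L hL => ?_
        rw [(mem_filter.1 hL).2.1]
    _ ≤ ∑ k ∈ Icc 3 #U, ∑ _L : Fin k → V, x ^ k :=
        sum_le_sum fun k _ => sum_le_sum_of_subset_of_nonneg (subset_univ _)
          fun _ _ _ => pow_nonneg hx0 k
    _ = ∑ k ∈ Icc 3 #U, (Fintype.card V * x) ^ k := by simp [mul_pow]

end SimpleGraph

/-- If `p(n) = w(n)/n` with `w(n) ≥ 0` and `w(n) → 0`, then the probability that the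
Erdős–Rényi random graph `G(n, p(n))` is a forest (contains no cycle) tends to `1`. -/
theorem prob_forest_tendsto_one (w p : ℕ → ℝ) (hw0 : ∀ n, 0 ≤ w n)
    (hp : ∀ n, p n = w n / n) (hw : Tendsto w atTop (nhds 0)) :
    Tendsto (fun n =>
      ∑ E ∈ ((Finset.univ : Finset (Sym2 (Fin n))).filter fun a => ¬ a.IsDiag).powerset,
        if (SimpleGraph.fromEdgeSet (E : Set (Sym2 (Fin n)))).IsAcyclic then
          p n ^ E.card *
            (1 - p n) ^
              (((Finset.univ : Finset (Sym2 (Fin n))).filter fun a => ¬ a.IsDiag).card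
                - E.card)
        else 0) atTop (nhds 1) := by
  simp_rw [sum_powerset_ite_eq_one_sub]
  have hlim : Tendsto (fun n => w n ^ 3 / (1 - w n)) atTop (nhds 0) := by
    simpa [Pi.div_def] using (hw.pow 3).div (tendsto_const_nhds.sub hw) (by norm_num)
  have hbound : ∀ᶠ n in atTop, 0 ≤ p n ∧ p n ≤ 1 ∧ n * p n = w n ∧ w n < 1 := by
    filter_upwards [hw.eventually_lt_const one_pos, eventually_ge_atTop 1] with n hw1 hn
    have hn0 : (0 : ℝ) < n := by exact_mod_cast hn
    rw [hp n, mul_div_cancel₀ _ hn0.ne', div_le_one hn0]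
    exact ⟨div_nonneg (hw0 n) hn0.le, by linarith [(Nat.one_le_cast (α := ℝ)).2 hn], rfl, hw1⟩
  convert tendsto_const_nhds.sub (squeeze_zero'
    (hbound.mono fun n ⟨hp0, hp1, _⟩ => sum_nonneg fun E _ => ?_)
    (hbound.mono fun n ⟨hp0, hp1, hnp, hw1⟩ => ?_) hlim) using 2
  · rw [sub_zero]
  · exact pow_mul_one_sub_pow_nonneg hp0 hp1 _ _
  · calc _ ≤ ∑ k ∈ Icc 3 _, (Fintype.card (Fin n) * p n) ^ k :=
          SimpleGraph.sum_powerset_filter_not_isAcyclic_le _ hp0 hp1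
      _ = ∑ k ∈ Ico 3 (_ + 1), w n ^ k := by
          rw [Fintype.card_fin, hnp, Ico_add_one_right_eq_Icc]
      _ ≤ w n ^ 3 / (1 - w n) := geom_sum_Ico_le_of_lt_one (hw0 n) hw1
end

section
/- Let d ≥ 1 and suppose p(n) = w(n)/n with w(n) → ∞. Then with X^n the number of (d+2)-subsets of [n] all of whose d-faces belong to Δ ∈ Y_{n,p(n),d}, we have E(X^n) → ∞ and ξ*/E(X^n) → 0, where ξ* = (d+2)(n−d−1)p^{d+1}. Consequently Prob(X^n > 0) → 1. -/
/-!
Second moment method. Under the product measure on sets of `d`-faces, the number `X` of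
`(d+2)`-sets with full boundary has mean `E = C(n, d+2) p^{d+2}`, which is at least a constant
times `w^{d+2}`. The boundaries of two distinct `(d+2)`-sets share at most one `d`-face, and
share one only when the sets meet in `d+1` vertices; there are at most `(d+2) n` such partners
of a given set. Hence `E[X²] ≤ E² + E (1 + (d+2) n p^{d+1})`, and `(d+2) n p^{d+1} = O(E / w)`.
Cauchy–Schwarz, `E[X]² ≤ P(X > 0) E[X²]`, then forces `P(X > 0) → 1`.
-/

open scoped Classical

open Filter

open Finset

open scoped Nat

section BinomialWeight

variable {ι R : Type*} [CommRing R]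

/-- Probability that the random subset of `F` containing each element independently with
probability `p` equals `S`. -/
def binomialWeight (p : R) (F S : Finset ι) : R := p ^ S.card * (1 - p) ^ (F.card - S.card)

theorem sum_binomialWeight (p : R) (F : Finset ι) :
    ∑ S ∈ F.powerset, binomialWeight p F S = 1 := by
  simp only [binomialWeight, sum_pow_mul_eq_add_pow, add_sub_cancel, one_pow]

theorem binomialWeight_nonneg [PartialOrder R] [IsOrderedRing R] {p : R}
    (hp0 : 0 ≤ p) (hp1 : p ≤ 1) (F S : Finset ι) : 0 ≤ binomialWeight p F S :=
  mul_nonneg (pow_nonneg hp0 _) (pow_nonneg (sub_nonneg.2 hp1) _)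

theorem sum_ite_binomialWeight_le_one [PartialOrder R] [IsOrderedRing R]
    {p : R} (hp0 : 0 ≤ p) (hp1 : p ≤ 1) (F : Finset ι) (q : Finset ι → Prop)
    [DecidablePred q] :
    ∑ S ∈ F.powerset, (if q S then binomialWeight p F S else 0) ≤ 1 := by
  rw [← sum_filter, ← sum_binomialWeight p F]
  exact sum_le_sum_of_subset_of_nonneg (filter_subset _ _)
    fun S _ _ => binomialWeight_nonneg hp0 hp1 F S

variable [DecidableEq ι]

theorem sum_Icc_binomialWeight (p : R) {A F : Finset ι} (hA : A ⊆ F) :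
    ∑ S ∈ Icc A F, binomialWeight p F S = p ^ A.card := by
  have hinj : Set.InjOn (A ∪ ·) (F \ A).powerset := fun B hB B' hB' h => by
    simp only [coe_powerset, Set.mem_preimage, Set.mem_powerset_iff, coe_subset] at hB hB'
    simpa [union_sdiff_cancel_left (disjoint_sdiff.mono_right hB),
      union_sdiff_cancel_left (disjoint_sdiff.mono_right hB')] using congrArg (· \ A) h
  rw [Icc_eq_image_powerset hA, sum_image hinj]
  calc ∑ B ∈ (F \ A).powerset, binomialWeight p F (A ∪ B)
      = ∑ B ∈ (F \ A).powerset, p ^ A.card * binomialWeight p (F \ A) B := by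
        refine sum_congr rfl fun B hB => ?_
        have hBA : Disjoint A B := disjoint_sdiff.mono_right (mem_powerset.1 hB)
        have hBF : B.card ≤ (F \ A).card := card_le_card (mem_powerset.1 hB)
        have hAF := card_sdiff_add_card_eq_card hA
        rw [binomialWeight, binomialWeight, card_union_of_disjoint hBA, pow_add, mul_assoc]
        congr 3
        omega
    _ = p ^ A.card := by rw [← mul_sum, sum_binomialWeight, mul_one]

theorem sum_binomialWeight_mul_card_filter_subset {β : Type*} (p : R) (F : Finset ι)
    (I : Finset β) (A : β → Finset ι) (hA : ∀ i ∈ I, A i ⊆ F) :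
    ∑ S ∈ F.powerset, binomialWeight p F S * #{i ∈ I | A i ⊆ S} =
      ∑ i ∈ I, p ^ (A i).card := by
  simp only [card_filter, Nat.cast_sum, Nat.cast_ite, Nat.cast_one, Nat.cast_zero, mul_sum,
    mul_ite, mul_one, mul_zero]
  rw [sum_comm]
  refine sum_congr rfl fun i hi => ?_
  rw [← sum_filter, ← sum_Icc_binomialWeight p (hA i hi)]
  congr 1
  ext S
  simp [and_comm]

end BinomialWeight

theorem sq_sum_mul_le_sum_ite_pos_mul_sum_mul_sq {ι R : Type*} [CommSemiring R] [LinearOrder R]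
    [IsStrictOrderedRing R] [ExistsAddOfLE R] (s : Finset ι) {μ : ι → R} (N : ι → ℕ)
    (hμ : ∀ a ∈ s, 0 ≤ μ a) :
    (∑ a ∈ s, μ a * N a) ^ 2 ≤
      (∑ a ∈ s, if 0 < N a then μ a else 0) * ∑ a ∈ s, μ a * N a ^ 2 := by
  refine sum_sq_le_sum_mul_sum_of_sq_le_mul s (fun a ha => ?_)
    (fun a ha => mul_nonneg (hμ a ha) (sq_nonneg _)) (fun a ha => le_of_eq ?_)
  · split_ifs
    exacts [hμ a ha, le_rfl]
  · split_ifs with h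
    · ring
    · simp [Nat.eq_zero_of_not_pos h]

namespace Finset

variable {α : Type*} {k : ℕ} {T T' : Finset α}

theorem card_powersetCard_of_card_eq_succ (hT : T.card = k + 1) :
    (T.powersetCard k).card = k + 1 := by
  rw [card_powersetCard, hT, Nat.choose_succ_self_right]

variable [DecidableEq α]

theorem powersetCard_inter (k : ℕ) (s t : Finset α) :
    (s ∩ t).powersetCard k = s.powersetCard k ∩ t.powersetCard k := by
  ext f
  simp only [mem_powersetCard, mem_inter, subset_inter_iff]
  tauto

theorem card_inter_le_of_ne (hT : T.card = k + 1) (hT' : T'.card = k + 1) (hne : T' ≠ T) :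
    (T ∩ T').card ≤ k := by
  by_contra! h
  have h₁ := eq_of_subset_of_card_le (inter_subset_left (s₁ := T) (s₂ := T')) (by omega)
  have h₂ := eq_of_subset_of_card_le (inter_subset_right (s₁ := T) (s₂ := T')) (by omega)
  exact hne (h₂.symm.trans h₁)

theorem card_union_powersetCard (hT : T.card = k + 1) (hT' : T'.card = k + 1) :
    (T.powersetCard k ∪ T'.powersetCard k).card = 2 * (k + 1) - (T ∩ T').card.choose k := by
  have h := card_union_add_card_inter (T.powersetCard k) (T'.powersetCard k)
  rw [← powersetCard_inter, card_powersetCard, card_powersetCard_of_card_eq_succ hT,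
    card_powersetCard_of_card_eq_succ hT'] at h
  omega

theorem pow_card_union_powersetCard_le {R : Type*} [CommSemiring R] [PartialOrder R]
    [IsOrderedRing R] {p : R} (hp0 : 0 ≤ p)
    (hT : T.card = k + 1) (hT' : T'.card = k + 1) :
    p ^ (T.powersetCard k ∪ T'.powersetCard k).card ≤
      -- `T' = T`, `T'` sharing exactly one `k`-face with `T`, and `T'` sharing none
      (if T' = T then p ^ (k + 1) else 0) + (if (T ∩ T').card = k then p ^ (2 * k + 1) else 0)
        + p ^ (2 * k + 2) := by
  by_cases hTT : T' = T
  · subst hTT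
    simp only [union_self, inter_self, card_powersetCard_of_card_eq_succ hT, hT, if_true,
      if_neg (Nat.succ_ne_self k), add_zero]
    exact le_add_of_nonneg_right (pow_nonneg hp0 _)
  rw [if_neg hTT, zero_add, card_union_powersetCard hT hT']
  rcases (card_inter_le_of_ne hT hT' hTT).eq_or_lt with h | h
  · rw [if_pos h, h, Nat.choose_self, show 2 * (k + 1) - 1 = 2 * k + 1 by omega]
    exact le_add_of_nonneg_right (pow_nonneg hp0 _)
  · rw [if_neg h.ne, Nat.choose_eq_zero_of_lt h, zero_add, Nat.sub_zero, mul_add, mul_one]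

theorem card_filter_card_inter_eq_le [Fintype α] (hT : T.card = k + 1) :
    #{T' ∈ powersetCard (k + 1) univ | (T ∩ T').card = k} ≤ (k + 1) * Fintype.card α := by
  calc #{T' ∈ powersetCard (k + 1) univ | (T ∩ T').card = k}
      ≤ ((T.powersetCard k ×ˢ univ).image fun fx : Finset α × α =>
          insert fx.2 fx.1).card := by
        refine card_le_card fun T' hT' => ?_
        simp only [mem_filter, mem_powersetCard] at hT'
        obtain ⟨x, hx⟩ := card_eq_one.1 (show (T' \ T).card = 1 by
          rw [card_sdiff]; omega)
        refine mem_image.2 ⟨(T ∩ T', x), ?_, ?_⟩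
        · simp [mem_powersetCard, inter_subset_left, hT'.2]
        · show insert x (T ∩ T') = T'
          rw [insert_eq, ← hx, inter_comm, sdiff_union_inter]
    _ ≤ (k + 1) * Fintype.card α := by
        rw [← card_univ, ← card_powersetCard_of_card_eq_succ hT, ← card_product]
        exact card_image_le

end Finset

section BoundaryCount

variable {α : Type*} [Fintype α] [DecidableEq α]

theorem sum_sum_pow_card_union_powersetCard_le {R : Type*} [CommSemiring R] [PartialOrder R]
    [IsOrderedRing R] {p : R} (hp0 : 0 ≤ p) (k : ℕ) :
    ∑ T ∈ powersetCard (k + 1) (univ : Finset α), ∑ T' ∈ powersetCard (k + 1) univ,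
        p ^ (T.powersetCard k ∪ T'.powersetCard k).card ≤
      ((Fintype.card α).choose (k + 1) * p ^ (k + 1)) ^ 2 +
        (Fintype.card α).choose (k + 1) * p ^ (k + 1) *
          (1 + (k + 1) * Fintype.card α * p ^ k) := by
  set n := Fintype.card α
  have hinner : ∀ T ∈ powersetCard (k + 1) (univ : Finset α),
      ∑ T' ∈ powersetCard (k + 1) univ, p ^ (T.powersetCard k ∪ T'.powersetCard k).card ≤
        p ^ (k + 1) + (k + 1) * n * p ^ (2 * k + 1) + n.choose (k + 1) * p ^ (2 * k + 2) := by
    intro T hT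
    have hT := (mem_powersetCard.1 hT).2
    calc _ ≤ ∑ T' ∈ powersetCard (k + 1) univ, ((if T' = T then p ^ (k + 1) else 0) +
            (if (T ∩ T').card = k then p ^ (2 * k + 1) else 0) + p ^ (2 * k + 2)) :=
          sum_le_sum fun T' hT' => pow_card_union_powersetCard_le hp0 hT (mem_powersetCard.1 hT').2
      _ = p ^ (k + 1) + #{T' ∈ powersetCard (k + 1) univ | (T ∩ T').card = k} * p ^ (2 * k + 1)
            + n.choose (k + 1) * p ^ (2 * k + 2) := by
          rw [sum_add_distrib, sum_add_distrib, sum_ite_eq',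
            if_pos (mem_powersetCard.2 ⟨subset_univ T, hT⟩), ← sum_filter, sum_const,
            sum_const, card_powersetCard, card_univ, nsmul_eq_mul, nsmul_eq_mul]
      _ ≤ _ := by
          gcongr
          simpa using Nat.mono_cast (α := R) (card_filter_card_inter_eq_le hT)
  calc _ ≤ ∑ T ∈ powersetCard (k + 1) (univ : Finset α),
        (p ^ (k + 1) + (k + 1) * n * p ^ (2 * k + 1) + n.choose (k + 1) * p ^ (2 * k + 2)) :=
        sum_le_sum hinner
    _ = _ := by
        rw [sum_const, card_powersetCard, card_univ, nsmul_eq_mul]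
        ring

/-- With `k = d + 1` and `S` the set of `d`-simplices of the complex, this is `X^n`. -/
def boundaryCount (k : ℕ) (S : Finset (Finset α)) : ℕ :=
  ((univ : Finset α).powerset.filter fun T =>
    T.card = k + 1 ∧ ∀ f ∈ T.powerset, f.card = k → f ∈ S).card

theorem boundaryCount_eq_card_filter (k : ℕ) (S : Finset (Finset α)) :
    boundaryCount k S = #{T ∈ powersetCard (k + 1) univ | T.powersetCard k ⊆ S} := by
  rw [boundaryCount, powersetCard_eq_filter, filter_filter]
  congr 1
  refine filter_congr fun T _ => and_congr_right fun _ => ?_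
  simp only [subset_iff, mem_powersetCard, mem_powerset, and_imp]

variable {R : Type*} [CommRing R] {F : Finset (Finset α)} {k : ℕ}

theorem sum_binomialWeight_mul_boundaryCount (p : R)
    (hF : ∀ f : Finset α, f.card = k → f ∈ F) :
    ∑ S ∈ F.powerset, binomialWeight p F S * boundaryCount k S =
      (Fintype.card α).choose (k + 1) * p ^ (k + 1) := by
  simp_rw [boundaryCount_eq_card_filter]
  rw [sum_binomialWeight_mul_card_filter_subset p F _ _ fun T _ f hf =>
      hF f (mem_powersetCard.1 hf).2,
    sum_congr rfl fun T hT => by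
      rw [card_powersetCard_of_card_eq_succ (mem_powersetCard.1 hT).2],
    sum_const, card_powersetCard, card_univ, nsmul_eq_mul]

theorem sum_binomialWeight_mul_boundaryCount_sq (p : R)
    (hF : ∀ f : Finset α, f.card = k → f ∈ F) :
    ∑ S ∈ F.powerset, binomialWeight p F S * boundaryCount k S ^ 2 =
      ∑ T ∈ powersetCard (k + 1) (univ : Finset α), ∑ T' ∈ powersetCard (k + 1) univ,
        p ^ (T.powersetCard k ∪ T'.powersetCard k).card := by
  have hsq : ∀ S : Finset (Finset α), (boundaryCount k S : R) ^ 2 =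
      #{P ∈ powersetCard (k + 1) (univ : Finset α) ×ˢ powersetCard (k + 1) univ |
        P.1.powersetCard k ∪ P.2.powersetCard k ⊆ S} := fun S => by
    rw [boundaryCount_eq_card_filter, sq, ← Nat.cast_mul, ← card_product, ← filter_product]
    simp only [union_subset_iff]
  simp_rw [hsq]
  rw [sum_binomialWeight_mul_card_filter_subset p F _ _ fun P _ => union_subset
    (fun f hf => hF f (mem_powersetCard.1 hf).2) (fun f hf => hF f (mem_powersetCard.1 hf).2),
    sum_product]

theorem sq_choose_mul_pow_le_sum_ite_boundaryCount_pos_mul [LinearOrder R] [IsStrictOrderedRing R]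
    {p : R} (hp0 : 0 ≤ p) (hp1 : p ≤ 1)
    (hF : ∀ f : Finset α, f.card = k → f ∈ F) :
    ((Fintype.card α).choose (k + 1) * p ^ (k + 1)) ^ 2 ≤
      (∑ S ∈ F.powerset, if 0 < boundaryCount k S then binomialWeight p F S else 0) *
        (((Fintype.card α).choose (k + 1) * p ^ (k + 1)) ^ 2 +
          (Fintype.card α).choose (k + 1) * p ^ (k + 1) *
            (1 + (k + 1) * Fintype.card α * p ^ k)) := by
  rw [← sum_binomialWeight_mul_boundaryCount p hF]
  refine (sq_sum_mul_le_sum_ite_pos_mul_sum_mul_sq _ _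
    fun S _ => binomialWeight_nonneg hp0 hp1 F S).trans ?_
  rw [sum_binomialWeight_mul_boundaryCount p hF, sum_binomialWeight_mul_boundaryCount_sq p hF]
  gcongr
  · exact sum_nonneg fun S _ => by
      split_ifs
      exacts [binomialWeight_nonneg hp0 hp1 F S, le_rfl]
  · exact sum_sum_pow_card_union_powersetCard_le hp0 k

end BoundaryCount

theorem Nat.pow_le_two_pow_mul_factorial_mul_choose {n k : ℕ} (h : 2 * k ≤ n + 2) :
    n ^ k ≤ 2 ^ k * k ! * n.choose k :=
  calc n ^ k ≤ (2 * (n + 1 - k)) ^ k := Nat.pow_le_pow_left (by omega) k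
    _ = 2 ^ k * (n + 1 - k) ^ k := mul_pow ..
    _ ≤ 2 ^ k * n.descFactorial k := Nat.mul_le_mul_left _ (Nat.pow_sub_le_descFactorial n k)
    _ = 2 ^ k * k ! * n.choose k := by rw [Nat.descFactorial_eq_factorial_mul_choose, mul_assoc]

theorem mul_pow_le_choose_mul_pow {R : Type*} [CommSemiring R] [PartialOrder R] [IsOrderedRing R]
    {n k : ℕ} (h : 2 * k ≤ n + 2) {p : R} (hp : 0 ≤ p) :
    (n * p) ^ k ≤ 2 ^ k * k ! * (n.choose k * p ^ k) := by
  rw [mul_pow, ← mul_assoc]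
  gcongr
  simpa using Nat.mono_cast (α := R) (Nat.pow_le_two_pow_mul_factorial_mul_choose h)

section Asymptotics

variable {w p : ℕ → ℝ}

theorem eventually_natCast_mul_eq (hpw : ∀ n, p n = w n / n) :
    ∀ᶠ n : ℕ in atTop, n * p n = w n := by
  filter_upwards [eventually_ne_atTop 0] with n hn
  rw [hpw n, mul_div_cancel₀ _ (Nat.cast_ne_zero.2 hn)]

theorem tendsto_choose_mul_pow_atTop (k : ℕ) (hpw : ∀ n, p n = w n / n) (hp0 : ∀ n, 0 ≤ p n)
    (hw : Tendsto w atTop atTop) :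
    Tendsto (fun n : ℕ => (n.choose (k + 1) : ℝ) * p n ^ (k + 1)) atTop atTop := by
  have hc : (0 : ℝ) < 2 ^ (k + 1) * (k + 1)! := by positivity
  refine tendsto_atTop_mono' _ ?_ (((tendsto_pow_atTop k.succ_ne_zero).comp hw).atTop_div_const hc)
  filter_upwards [eventually_natCast_mul_eq hpw, eventually_ge_atTop (2 * (k + 1))] with n hn h2
  rw [Function.comp_apply, div_le_iff₀' hc, ← hn]
  exact mul_pow_le_choose_mul_pow (by omega) (hp0 n)

theorem tendsto_mul_pow_div_choose_mul_pow {k : ℕ} (hk : 1 ≤ k) (hpw : ∀ n, p n = w n / n)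
    (hp0 : ∀ n, 0 ≤ p n) (hw : Tendsto w atTop atTop) :
    Tendsto (fun n : ℕ => (k + 1) * n * p n ^ k / (n.choose (k + 1) * p n ^ (k + 1))) atTop
      (nhds 0) := by
  set c : ℝ := 2 ^ (k + 1) * (k + 1)!
  refine squeeze_zero' ?_ ?_ (tendsto_const_nhds (x := (k + 1) * c).div_atTop hw)
  · exact Eventually.of_forall fun n => by have := hp0 n; positivity
  filter_upwards [eventually_natCast_mul_eq hpw, eventually_ge_atTop (2 * (k + 1)),
    hw.eventually_gt_atTop 0] with n hn h2 hwn
  have hE := mul_pow_le_choose_mul_pow (n := n) (k := k + 1) (by omega) (hp0 n)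
  rw [hn] at hE
  rw [div_le_div_iff₀ ((div_pos (pow_pos hwn _) (by positivity)).trans_le
    ((div_le_iff₀' (by positivity)).2 hE)) hwn]
  have hn1 : (1 : ℝ) ≤ n := by exact_mod_cast (show 1 ≤ n by omega)
  calc (k + 1) * n * p n ^ k * w n = (k + 1) * (n ^ 2 * p n ^ (k + 1)) := by rw [← hn]; ring
    _ ≤ (k + 1) * (n ^ (k + 1) * p n ^ (k + 1)) := by
        have := hp0 n
        gcongr
        omega
    _ = (k + 1) * (n * p n) ^ (k + 1) := by ring
    _ ≤ (k + 1) * c * (n.choose (k + 1) * p n ^ (k + 1)) := by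
        rw [mul_assoc]
        gcongr
        exact mul_pow_le_choose_mul_pow (by omega) (hp0 n)

end Asymptotics

/-- Alon–Spencer, Corollary 3.5, with `E = E[X]` and `P = P(X > 0)`: `h` combines
Cauchy–Schwarz, `E[X]² ≤ P(X > 0) E[X²]`, with `E[X²] ≤ E² + E (1 + Δ)`. -/
theorem tendsto_nhds_one_of_sq_le_mul {ι : Type*} {l : Filter ι} {E Δ P : ι → ℝ}
    (hE : Tendsto E l atTop) (hΔ : Tendsto (fun i => Δ i / E i) l (nhds 0))
    (hP : ∀ i, P i ≤ 1)
    (h : ∀ i, E i ^ 2 ≤ P i * (E i ^ 2 + E i * (1 + Δ i))) : Tendsto P l (nhds 1) := by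
  have hD : Tendsto (fun i => 1 + (1 + Δ i) / E i) l (nhds 1) := by
    have := (hE.inv_tendsto_atTop.add hΔ).const_add 1
    simp only [add_zero] at this
    exact this.congr fun i => by simp only [Pi.inv_apply, add_div, one_div]
  refine tendsto_of_tendsto_of_tendsto_of_le_of_le' (by simpa using hD.inv₀ one_ne_zero)
    tendsto_const_nhds ?_ (Eventually.of_forall hP)
  filter_upwards [hE.eventually_gt_atTop 0, hD.eventually (lt_mem_nhds one_pos)] with i hEi hDi
  rw [inv_le_iff_one_le_mul₀' hDi, ← mul_le_mul_iff_of_pos_left (pow_pos hEi 2), mul_one]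
  calc E i ^ 2 ≤ P i * (E i ^ 2 + E i * (1 + Δ i)) := h i
    _ = E i ^ 2 * ((1 + (1 + Δ i) / E i) * P i) := by field_simp

theorem second_moment_method_random_complex_general (d : ℕ)
    (w p : ℕ → ℝ) (hpw : ∀ n, p n = w n / n)
    (hp0 : ∀ n, 0 ≤ p n) (hp1 : ∀ n, p n ≤ 1)
    (hw : Tendsto w atTop atTop) :
    Tendsto (fun n : ℕ =>
        ∑ S ∈ ((Finset.univ : Finset (Fin n)).powerset.filter
            fun s => s.card = d + 1).powerset,
          p n ^ S.card *
            (1 - p n) ^ (((Finset.univ : Finset (Fin n)).powerset.filter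
                fun s => s.card = d + 1).card - S.card) *
            (((Finset.univ : Finset (Fin n)).powerset.filter fun T =>
                T.card = d + 2 ∧ ∀ f ∈ T.powerset, f.card = d + 1 → f ∈ S).card : ℝ))
      atTop atTop ∧
    Tendsto (fun n : ℕ =>
        ((d + 2 : ℝ) * ((n : ℝ) - d - 1) * p n ^ (d + 1)) /
          ∑ S ∈ ((Finset.univ : Finset (Fin n)).powerset.filter
              fun s => s.card = d + 1).powerset,
            p n ^ S.card *
              (1 - p n) ^ (((Finset.univ : Finset (Fin n)).powerset.filter
                  fun s => s.card = d + 1).card - S.card) *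
              (((Finset.univ : Finset (Fin n)).powerset.filter fun T =>
                  T.card = d + 2 ∧ ∀ f ∈ T.powerset, f.card = d + 1 → f ∈ S).card : ℝ))
      atTop (nhds 0) ∧
    Tendsto (fun n : ℕ =>
        ∑ S ∈ ((Finset.univ : Finset (Fin n)).powerset.filter
            fun s => s.card = d + 1).powerset,
          if 0 < ((Finset.univ : Finset (Fin n)).powerset.filter fun T =>
              T.card = d + 2 ∧ ∀ f ∈ T.powerset, f.card = d + 1 → f ∈ S).card then
            p n ^ S.card *
              (1 - p n) ^ (((Finset.univ : Finset (Fin n)).powerset.filter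
                  fun s => s.card = d + 1).card - S.card)
          else 0)
      atTop (nhds 1) := by
  have hF (n : ℕ) (f : Finset (Fin n)) (hf : f.card = d + 1) :
      f ∈ (univ : Finset (Fin n)).powerset.filter fun s => s.card = d + 1 := by simp [hf]
  have hmean (n : ℕ) := sum_binomialWeight_mul_boundaryCount (p n) (hF n)
  have hsm (n : ℕ) := sq_choose_mul_pow_le_sum_ite_boundaryCount_pos_mul (hp0 n) (hp1 n) (hF n)
  simp only [Fintype.card_fin] at hmean hsm
  have hE := tendsto_choose_mul_pow_atTop (d + 1) hpw hp0 hw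
  have hΔ := tendsto_mul_pow_div_choose_mul_pow (Nat.le_add_left 1 d) hpw hp0 hw
  refine ⟨hE.congr fun n => (hmean n).symm, ?_, tendsto_nhds_one_of_sq_le_mul hE hΔ
    (fun n => sum_ite_binomialWeight_le_one (hp0 n) (hp1 n) _ _) hsm⟩
  have hξ : Tendsto (fun n : ℕ => (d + 2 : ℝ) * (n - d - 1) * p n ^ (d + 1) /
      (n.choose (d + 1 + 1) * p n ^ (d + 1 + 1))) atTop (nhds 0) := by
    refine squeeze_zero' ?_ (Eventually.of_forall fun n => ?_) hΔ
    · filter_upwards [eventually_ge_atTop (d + 1)] with n hn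
      have hn : (d : ℝ) + 1 ≤ n := by exact_mod_cast hn
      have := hp0 n
      exact div_nonneg (mul_nonneg (by nlinarith) (by positivity)) (by positivity)
    · have := hp0 n
      gcongr ?_ * _ / _
      push_cast
      nlinarith
  exact hξ.congr fun n => by rw [← hmean n]; rfl

/-- Second moment method for the random `d`-complex `Y_{n,p,d}`: with
`p(n) = w(n)/n`, `0 ≤ p(n) ≤ 1`, and `w(n) → ∞`, let `X^n` be the number of
`(d+2)`-subsets of `[n]` all of whose `d`-faces belong to the random complex
(identified with its set `S` of `d`-simplices).  Then `E(X^n) → ∞`,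
`ξ*/E(X^n) → 0` where `ξ* = (d+2)(n−d−1)p^{d+1}`, and consequently
`Prob(X^n > 0) → 1`. -/
theorem second_moment_method_random_complex (d : ℕ) (hd : 1 ≤ d)
    (w p : ℕ → ℝ) (hpw : ∀ n, p n = w n / n)
    (hp0 : ∀ n, 0 ≤ p n) (hp1 : ∀ n, p n ≤ 1)
    (hw : Tendsto w atTop atTop) :
    Tendsto (fun n : ℕ =>
        ∑ S ∈ ((Finset.univ : Finset (Fin n)).powerset.filter
            fun s => s.card = d + 1).powerset,
          p n ^ S.card *
            (1 - p n) ^ (((Finset.univ : Finset (Fin n)).powerset.filter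
                fun s => s.card = d + 1).card - S.card) *
            (((Finset.univ : Finset (Fin n)).powerset.filter fun T =>
                T.card = d + 2 ∧ ∀ f ∈ T.powerset, f.card = d + 1 → f ∈ S).card : ℝ))
      atTop atTop ∧
    Tendsto (fun n : ℕ =>
        ((d + 2 : ℝ) * ((n : ℝ) - d - 1) * p n ^ (d + 1)) /
          ∑ S ∈ ((Finset.univ : Finset (Fin n)).powerset.filter
              fun s => s.card = d + 1).powerset,
            p n ^ S.card *
              (1 - p n) ^ (((Finset.univ : Finset (Fin n)).powerset.filter
                  fun s => s.card = d + 1).card - S.card) *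
              (((Finset.univ : Finset (Fin n)).powerset.filter fun T =>
                  T.card = d + 2 ∧ ∀ f ∈ T.powerset, f.card = d + 1 → f ∈ S).card : ℝ))
      atTop (nhds 0) ∧
    Tendsto (fun n : ℕ =>
        ∑ S ∈ ((Finset.univ : Finset (Fin n)).powerset.filter
            fun s => s.card = d + 1).powerset,
          if 0 < ((Finset.univ : Finset (Fin n)).powerset.filter fun T =>
              T.card = d + 2 ∧ ∀ f ∈ T.powerset, f.card = d + 1 → f ∈ S).card then
            p n ^ S.card *
              (1 - p n) ^ (((Finset.univ : Finset (Fin n)).powerset.filter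
                  fun s => s.card = d + 1).card - S.card)
          else 0)
      atTop (nhds 1) :=
  second_moment_method_random_complex_general d w p hpw hp0 hp1 hw
end

section
/- Let d ≥ 1 and p(n) = w(n)/n with lim w(n) = ∞. Then the probability that the top homology H_d(Δ; Z/2) of Δ ∈ Y_{n,p(n),d} is nonzero tends to 1 as n → ∞. -/
open scoped Classical

open Filter

/-- The `ℤ/2` simplicial boundary of a chain (identified with its support) of
simplices (finite vertex sets): a face lies in the boundary iff it is a
codimension-one face of an odd number of simplices of the chain. -/
def bdryZ2 {n : ℕ} (c : Finset (Finset (Fin n))) : Finset (Finset (Fin n)) :=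
  (c.biUnion fun t => t.powerset).filter fun s =>
    Odd ((c.filter fun t => s ⊆ t ∧ s.card + 1 = t.card).card)

/-!
A family of more than `C(n, d)` distinct `d`-simplices carries a nonempty `ℤ/2`-cycle: the
`ℤ/2` boundary map from the span of the family to the span of the `C(n, d)` faces of size `d`
then has a nonzero kernel vector, whose support is the cycle. Hence the complex fails to have
top homology only if its random set of `d`-simplices has at most `m = C(n, d)` elements among
`N = C(n, d + 1)` candidates. Comparing with the weights for `p / 2`, this has probability at
most `2 ^ m (1 - p / 2) ^ N ≤ exp (m log 2 - p N / 2)`, and `N ≥ m n / (2 (d + 1))` makes the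
exponent at most `m (log 2 - w / (4 (d + 1))) → -∞`.
-/

open Finset

lemma bdryZ2_eq_empty_of_forall_even {n d : ℕ} {c : Finset (Finset (Fin n))}
    (hc : ∀ t ∈ c, #t = d + 1)
    (heven : ∀ s : Finset (Fin n), #s = d → Even #{t ∈ c | s ⊆ t}) :
    bdryZ2 c = ∅ := by
  refine filter_eq_empty_iff.2 fun s _ hodd => ?_
  by_cases hs : #s = d
  · refine Nat.not_odd_iff_even.2 (heven s hs) ?_
    convert hodd using 3 with t ht
    simp [hc t ht, hs]
  · refine Nat.not_odd_iff_even.2 ?_ hodd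
    rw [card_eq_zero.2 <| filter_eq_empty_iff.2 fun t ht h => hs (by have := hc t ht; omega)]
    exact Even.zero

lemma exists_nonempty_subset_forall_even_of_choose_lt {n d : ℕ} (S : Finset (Finset (Fin n)))
    (hS : n.choose d < #S) :
    ∃ c ⊆ S, c.Nonempty ∧ ∀ s : Finset (Fin n), #s = d → Even #{t ∈ c | s ⊆ t} := by
  let M : Matrix (powersetCard d (univ : Finset (Fin n))) S (ZMod 2) :=
    fun s t => if s.1 ⊆ t.1 then 1 else 0
  obtain ⟨f, hf, hf0⟩ := Submodule.exists_mem_ne_zero_of_ne_bot <|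
    LinearMap.ker_ne_bot_of_finrank_lt (f := M.mulVecLin) <| by simpa using hS
  refine ⟨(univ.filter fun t => f t ≠ 0).map (.subtype _), ?_, ?_, fun s hs => ?_⟩
  · simp +contextual [Finset.subset_iff]
  · simpa [Finset.Nonempty, Function.ne_iff] using hf0
  · have h := congrFun (LinearMap.mem_ker.1 hf) ⟨s, mem_powersetCard.2 ⟨subset_univ s, hs⟩⟩
    rw [Matrix.mulVecLin_apply, Matrix.mulVec, dotProduct, Pi.zero_apply] at h
    rw [filter_map, card_map, filter_filter, ← ZMod.natCast_eq_zero_iff_even, natCast_card_filter]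
    refine .trans (sum_congr rfl fun t _ => ?_) h
    rcases (by decide : ∀ x : ZMod 2, x = 0 ∨ x = 1) (f t) with h | h <;> simp [M, h]

lemma exists_bdryZ2_eq_empty_of_choose_lt {n d : ℕ} {S : Finset (Finset (Fin n))}
    (hS : ∀ t ∈ S, #t = d + 1) (hcard : n.choose d < #S) :
    ∃ c ∈ S.powerset, c.Nonempty ∧ bdryZ2 c = ∅ := by
  obtain ⟨c, hcS, hc, heven⟩ := exists_nonempty_subset_forall_even_of_choose_lt S hcard
  exact ⟨c, mem_powerset.2 hcS, hc,
    bdryZ2_eq_empty_of_forall_even (fun t ht => hS t (hcS ht)) heven⟩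

section RandomSubset

variable {α : Type*} (T : Finset α) {p : ℝ}

lemma sum_powerset_pow_mul_one_sub_pow :
    ∑ S ∈ T.powerset, p ^ #S * (1 - p) ^ (#T - #S) = 1 := by
  rw [sum_pow_mul_eq_add_pow, add_sub_cancel, one_pow]

lemma sum_powerset_card_le_le_exp (hp0 : 0 ≤ p) (hp1 : p ≤ 1) (m : ℕ) :
    ∑ S ∈ T.powerset, (if #S ≤ m then p ^ #S * (1 - p) ^ (#T - #S) else 0)
      ≤ Real.exp (m * Real.log 2 - p * #T / 2) := by
  have hterm : ∀ S ∈ T.powerset, (if #S ≤ m then p ^ #S * (1 - p) ^ (#T - #S) else 0)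
      ≤ 2 ^ m * ((p / 2) ^ #S * (1 - p) ^ (#T - #S)) := fun S _ => by
    have : 0 ≤ 1 - p := by linarith
    split_ifs with hS
    · calc p ^ #S * (1 - p) ^ (#T - #S) = 2 ^ #S * ((p / 2) ^ #S * (1 - p) ^ (#T - #S)) := by
            rw [div_pow]; field_simp
        _ ≤ 2 ^ m * ((p / 2) ^ #S * (1 - p) ^ (#T - #S)) := by gcongr; norm_num
    · positivity
  calc _ ≤ ∑ S ∈ T.powerset, 2 ^ m * ((p / 2) ^ #S * (1 - p) ^ (#T - #S)) := sum_le_sum hterm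
    _ = 2 ^ m * (1 - p / 2) ^ #T := by
        rw [← mul_sum, sum_pow_mul_eq_add_pow]; ring_nf
    _ ≤ Real.exp (m * Real.log 2) * Real.exp (-(p / 2)) ^ #T := by
        rw [Real.exp_nat_mul, Real.exp_log two_pos]
        gcongr
        · linarith
        · linarith [Real.add_one_le_exp (-(p / 2))]
    _ = Real.exp (m * Real.log 2 - p * #T / 2) := by
        rw [← Real.exp_nat_mul, ← Real.exp_add]; ring_nf

lemma sum_powerset_ite_le_one (hp0 : 0 ≤ p) (hp1 : p ≤ 1) (P : Finset α → Prop)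
    [DecidablePred P] :
    ∑ S ∈ T.powerset, (if P S then p ^ #S * (1 - p) ^ (#T - #S) else 0) ≤ 1 := by
  have : 0 ≤ 1 - p := by linarith
  calc _ ≤ ∑ S ∈ T.powerset, p ^ #S * (1 - p) ^ (#T - #S) :=
        sum_le_sum fun S _ => by split_ifs <;> [exact le_rfl; positivity]
    _ = 1 := sum_powerset_pow_mul_one_sub_pow T

lemma one_sub_exp_le_sum_powerset_ite (hp0 : 0 ≤ p) (hp1 : p ≤ 1) (m : ℕ)
    (P : Finset α → Prop) [DecidablePred P] (hP : ∀ S ⊆ T, m < #S → P S) :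
    1 - Real.exp (m * Real.log 2 - p * #T / 2)
      ≤ ∑ S ∈ T.powerset, (if P S then p ^ #S * (1 - p) ^ (#T - #S) else 0) := by
  have : 0 ≤ 1 - p := by linarith
  calc _ ≤ 1 - ∑ S ∈ T.powerset, (if #S ≤ m then p ^ #S * (1 - p) ^ (#T - #S) else 0) := by
        linarith [sum_powerset_card_le_le_exp T hp0 hp1 m]
    _ = ∑ S ∈ T.powerset, p ^ #S * (1 - p) ^ (#T - #S)
          - ∑ S ∈ T.powerset, (if #S ≤ m then p ^ #S * (1 - p) ^ (#T - #S) else 0) := by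
        rw [sum_powerset_pow_mul_one_sub_pow]
    _ = ∑ S ∈ T.powerset, (if m < #S then p ^ #S * (1 - p) ^ (#T - #S) else 0) := by
        rw [← sum_sub_distrib]
        exact sum_congr rfl fun S _ => by split_ifs <;> first | omega | ring
    _ ≤ _ := sum_le_sum fun S hS => by
        split_ifs with hm hPS hPS
        · exact le_rfl
        · exact absurd (hP S (mem_powerset.1 hS) hm) hPS
        all_goals positivity

end RandomSubset

lemma choose_mul_le_two_mul_succ_mul_choose_succ {n d : ℕ} (h : 2 * d ≤ n) :
    n.choose d * n ≤ 2 * (d + 1) * n.choose (d + 1) :=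
  calc n.choose d * n ≤ n.choose d * (2 * (n - d)) := Nat.mul_le_mul_left _ (by omega)
    _ = 2 * (n.choose (d + 1) * (d + 1)) := by rw [Nat.choose_succ_right_eq]; ring
    _ = 2 * (d + 1) * n.choose (d + 1) := by ring

lemma tendsto_choose_mul_log_two_sub_atBot (d : ℕ) {w : ℕ → ℝ}
    (hw : Tendsto w atTop atTop) :
    Tendsto (fun n : ℕ => n.choose d * Real.log 2 - w n / n * n.choose (d + 1) / 2)
      atTop atBot := by
  have hd : (0 : ℝ) < 4 * (d + 1) := by positivity
  have hB : Tendsto (fun n => Real.log 2 - w n / (4 * (d + 1))) atTop atBot :=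
    tendsto_atBot_add_const_left _ _ (tendsto_neg_atTop_atBot.comp (hw.atTop_div_const hd))
  refine tendsto_atBot_mono' _ ?_ hB
  filter_upwards [hw.eventually_ge_atTop (4 * (d + 1) * Real.log 2),
    eventually_ge_atTop (max (2 * d) 1)] with n hwn hn
  have hn0 : (0 : ℝ) < n := by exact_mod_cast (le_of_max_le_right hn)
  have hC : (1 : ℝ) ≤ n.choose d := by
    exact_mod_cast Nat.choose_pos (by have := le_of_max_le_left hn; omega)
  have hchoose : (n.choose d : ℝ) * n ≤ 2 * (d + 1) * n.choose (d + 1) := by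
    exact_mod_cast choose_mul_le_two_mul_succ_mul_choose_succ (le_of_max_le_left hn)
  have hw0 : 0 ≤ w n := le_trans (by positivity) hwn
  have hB0 : Real.log 2 - w n / (4 * (d + 1)) ≤ 0 := by
    rw [sub_nonpos, le_div_iff₀ hd]; linarith
  have hdrift : n.choose d * (w n / (4 * (d + 1))) ≤ w n / n * n.choose (d + 1) / 2 := by
    rw [div_mul_eq_mul_div, div_div, mul_div_assoc', div_le_div_iff₀ hd (by positivity)]
    nlinarith [mul_le_mul_of_nonneg_left hchoose hw0]
  calc _ ≤ (n.choose d : ℝ) * (Real.log 2 - w n / (4 * (d + 1))) := by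
        rw [mul_sub]; linarith
    _ ≤ _ := by nlinarith

theorem top_homology_nonzero_above_threshold_general (d : ℕ)
    (w p : ℕ → ℝ) (hpw : ∀ n, p n = w n / n)
    (hp0 : ∀ n, 0 ≤ p n) (hp1 : ∀ n, p n ≤ 1)
    (hw : Tendsto w atTop atTop) :
    Tendsto (fun n : ℕ =>
        ∑ S ∈ ((Finset.univ : Finset (Fin n)).powerset.filter
            fun s => s.card = d + 1).powerset,
          if ∃ c ∈ S.powerset, c.Nonempty ∧ bdryZ2 c = ∅ then
            p n ^ S.card *
              (1 - p n) ^ (((Finset.univ : Finset (Fin n)).powerset.filter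
                  fun s => s.card = d + 1).card - S.card)
          else 0)
      atTop (nhds 1) := by
  refine tendsto_of_tendsto_of_tendsto_of_le_of_le
    (g := fun n => 1 - Real.exp (n.choose d * Real.log 2 - w n / n * n.choose (d + 1) / 2))
    ?_ tendsto_const_nhds (fun n => ?_) (fun n => sum_powerset_ite_le_one _ (hp0 n) (hp1 n) _)
  · simpa using tendsto_const_nhds.sub
      (Real.tendsto_exp_atBot.comp (tendsto_choose_mul_log_two_sub_atBot d hw))
  · set T : Finset (Finset (Fin n)) := (univ : Finset (Fin n)).powerset.filter (#· = d + 1)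
      with hTdef
    have hT : #T = n.choose (d + 1) := by
      rw [hTdef, ← powersetCard_eq_filter, card_powersetCard, card_univ, Fintype.card_fin]
    calc _ = 1 - Real.exp (n.choose d * Real.log 2 - p n * #T / 2) := by rw [hT, hpw]
      _ ≤ _ := one_sub_exp_le_sum_powerset_ite T (hp0 n) (hp1 n) _ _ fun S hS =>
        exists_bdryZ2_eq_empty_of_choose_lt fun t ht => (mem_filter.1 (hS ht)).2

/-- For `d ≥ 1` and `p(n) = w(n)/n` with `0 ≤ p(n) ≤ 1` and `w(n) → ∞`, the
probability that the top homology `H_d(Δ; ℤ/2)` of a random complex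
`Δ ∈ Y_{n,p(n),d}` is nonzero (equivalently, since `dim Δ ≤ d`, that `Δ` carries
a nonzero `ℤ/2` `d`-cycle, `Δ` being identified with its set `S` of `d`-simplices)
tends to `1` as `n → ∞`. -/
theorem top_homology_nonzero_above_threshold (d : ℕ) (hd : 1 ≤ d)
    (w p : ℕ → ℝ) (hpw : ∀ n, p n = w n / n)
    (hp0 : ∀ n, 0 ≤ p n) (hp1 : ∀ n, p n ≤ 1)
    (hw : Tendsto w atTop atTop) :
    Tendsto (fun n : ℕ =>
        ∑ S ∈ ((Finset.univ : Finset (Fin n)).powerset.filter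
            fun s => s.card = d + 1).powerset,
          if ∃ c ∈ S.powerset, c.Nonempty ∧ bdryZ2 c = ∅ then
            p n ^ S.card *
              (1 - p n) ^ (((Finset.univ : Finset (Fin n)).powerset.filter
                  fun s => s.card = d + 1).card - S.card)
          else 0)
      atTop (nhds 1) :=
  top_homology_nonzero_above_threshold_general d w p hpw hp0 hp1 hw
end
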